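/- arXiv:1501.06937 — 3 statements merged into one kernel-verified Lean document; each statement's English description precedes it below -/
import Mathlib

section
/- Every vertex i ∈ {1,...,m} of the graph Γ_m has degree 5. -/
/-- One-directional edge description of the graph `Γ_m`, on labels `1,…,m+6`. -/
def rel0 (m a b : ℕ) : Prop :=
  (1 ≤ a ∧ a ≤ m - 1 ∧ b = a + 1) ∨ (a = 1 ∧ b = m) ∨
  (a = m+1 ∧ 1 ≤ b ∧ b ≤ m ∧ (b % 4 = 1 ∨ b % 4 = 2)) ∨
  (a = m+2 ∧ 1 ≤ b ∧ b ≤ m ∧ (b % 4 = 2 ∨ b % 4 = 3)) ∨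
  (a = m+3 ∧ 1 ≤ b ∧ b ≤ m ∧ (b % 4 = 3 ∨ b % 4 = 0)) ∨
  (a = m+4 ∧ 1 ≤ b ∧ b ≤ m ∧ (b % 4 = 0 ∨ b % 4 = 1)) ∨
  (a = m+5 ∧ 1 ≤ b ∧ b ≤ m ∧ b % 2 = 1) ∨
  (a = m+6 ∧ 1 ≤ b ∧ b ≤ m ∧ b % 2 = 0) ∨
  (a = m+1 ∧ b = m+5) ∨ (a = m+3 ∧ b = m+5) ∨
  (a = m+2 ∧ b = m+6) ∨ (a = m+4 ∧ b = m+6)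

instance (m a b : ℕ) : Decidable (rel0 m a b) := by unfold rel0; infer_instance

/-- The graph `Γ_m` on vertex set `{1,…,m+6}`, encoded on `Fin (m+6)`
    where the vertex `v : Fin (m+6)` carries the label `v.val + 1`. -/
def Gamma (m : ℕ) : SimpleGraph (Fin (m+6)) where
  Adj a b := a ≠ b ∧ (rel0 m (a.val+1) (b.val+1) ∨ rel0 m (b.val+1) (a.val+1))
  symm := by constructor; intro a b h; exact ⟨fun e => h.1 e.symm, h.2.symm⟩
  loopless := by constructor; intro a h; exact h.1 rfl

instance (m : ℕ) : DecidableRel (Gamma m).Adj := fun a b =>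
  inferInstanceAs (Decidable (a ≠ b ∧ _))

/-- The permutation `g = (1,2,…,m)(m+1,m+2,m+3,m+4)(m+5,m+6)` on labels,
    written on `Fin (m+6)` (label = index + 1). -/
def gFun (m : ℕ) (v : Fin (m+6)) : Fin (m+6) :=
  if h : v.val < m then ⟨(v.val + 1) % m, lt_of_lt_of_le (Nat.mod_lt _ (by omega)) (by omega)⟩
  else if h2 : v.val < m + 3 then ⟨v.val + 1, by omega⟩
  else if h3 : v.val = m + 3 then ⟨m, by omega⟩
  else if h4 : v.val = m + 4 then ⟨m + 5, by omega⟩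
  else ⟨m + 4, by omega⟩


/-! Each cycle vertex is adjacent to its two cycle neighbours, to exactly two of the vertices
`m+1, …, m+4` (their residue classes mod 4 cover each residue exactly twice), and to exactly one of
`m+5, m+6` (by parity). These five vertices are distinct as soon as `m ≥ 3`. -/

namespace Gamma

variable {m : ℕ}

theorem adj_iff {u v : Fin (m + 6)} :
    (Gamma m).Adj u v ↔ u ≠ v ∧ (rel0 m (u + 1) (v + 1) ∨ rel0 m (v + 1) (u + 1)) :=
  Iff.rfl

theorem rel0_iff_of_le_left {a b : ℕ} (ha : a ≤ m) :
    rel0 m a b ↔ (1 ≤ a ∧ a ≤ m - 1 ∧ b = a + 1) ∨ (a = 1 ∧ b = m) := by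
  have h (k : ℕ) (hk : 0 < k) : a ≠ m + k := by omega
  simp [rel0, h]

theorem rel0_iff_of_le_right {a b : ℕ} (hb₁ : 1 ≤ b) (hb : b ≤ m) :
    rel0 m a b ↔ (1 ≤ a ∧ a ≤ m - 1 ∧ b = a + 1) ∨ (a = 1 ∧ b = m) ∨
      a = m + 1 + (b + 2) % 4 ∨ a = m + 1 + (b + 3) % 4 ∨ a = m + 5 + (b + 1) % 2 := by
  have h5 : b ≠ m + 5 := by omega
  have h6 : b ≠ m + 6 := by omega
  simp only [rel0, hb₁, hb, true_and, h5, h6, and_false, or_false]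
  omega

-- Successor and predecessor on the `m`-cycle in `0`-based indices (index `i` has label `i + 1`).
def cycleSucc (m i : ℕ) : ℕ := if i + 1 = m then 0 else i + 1

def cyclePred (m i : ℕ) : ℕ := if i = 0 then m - 1 else i - 1

theorem cycleSucc_lt {i : ℕ} (hi : i < m) : cycleSucc m i < m := by
  unfold cycleSucc; split_ifs <;> omega

theorem cyclePred_lt {i : ℕ} (hi : i < m) : cyclePred m i < m := by
  unfold cyclePred; split_ifs <;> omega

theorem cycleSucc_ne_cyclePred (hm : 3 ≤ m) (i : ℕ) : cycleSucc m i ≠ cyclePred m i := by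
  unfold cycleSucc cyclePred; split_ifs <;> omega

theorem adj_iff_of_lt (hm : 3 ≤ m) {v u : Fin (m + 6)} (hv : v.val < m) :
    (Gamma m).Adj v u ↔
      u.val = cycleSucc m v ∨ u.val = cyclePred m v ∨ u.val = m + v % 4 ∨
        u.val = m + (v + 3) % 4 ∨ u.val = m + 4 + v % 2 := by
  rw [adj_iff, Ne, Fin.ext_iff, rel0_iff_of_le_left (by omega)]
  unfold cycleSucc cyclePred
  rcases lt_or_ge u.val m with hu | hu
  · rw [rel0_iff_of_le_left (by omega)]
    split_ifs <;> omega
  · rw [rel0_iff_of_le_right (by omega) (by omega)]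
    have := u.isLt
    split_ifs <;> omega

theorem degree_of_lt (hm : 3 ≤ m) {v : Fin (m + 6)} (hv : v.val < m) :
    (Gamma m).degree v = 5 := by
  have hs := cycleSucc_lt hv
  have hp := cyclePred_lt hv
  have hsp := cycleSucc_ne_cyclePred hm v
  let nbrs : List (Fin (m + 6)) :=
    [⟨cycleSucc m v, by omega⟩, ⟨cyclePred m v, by omega⟩, ⟨m + v % 4, by omega⟩,
      ⟨m + (v + 3) % 4, by omega⟩, ⟨m + 4 + v % 2, by omega⟩]
  have h_eq : (Gamma m).neighborFinset v = nbrs.toFinset := by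
    ext u
    rw [SimpleGraph.mem_neighborFinset, adj_iff_of_lt hm hv, List.mem_toFinset]
    simp only [nbrs, List.mem_cons, List.not_mem_nil, or_false, Fin.ext_iff]
  have h_nodup : nbrs.Nodup := by
    simp only [nbrs, List.nodup_cons, List.mem_cons, List.not_mem_nil, or_false, Fin.ext_iff,
      List.nodup_nil, not_false_eq_true, and_true]
    omega
  rw [← SimpleGraph.card_neighborFinset_eq_degree, h_eq, List.toFinset_card_of_nodup h_nodup]
  rfl

end Gamma

/-- every vertex in `{1,…,m}` has degree `5` in `Γ_m`. -/
theorem stmt2 (n m : ℕ) (hn : 2 ≤ n) (hm : m = 2 ^ n) :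
    ∀ v : Fin (m + 6), v.val < m → (Gamma m).degree v = 5 := by
  have h4 : 2 ^ 2 ≤ m := hm ▸ Nat.pow_le_pow_right two_pos hn
  intro v hv
  exact Gamma.degree_of_lt (by omega) hv
end

section
/- There exists a graph on 10 vertices whose automorphism group is cyclic of order 4; specifically, the graph Γ_4 on vertices {1,...,10} (as defined) satisfies Aut(Γ_4) ≅ ℤ/4ℤ, generated by (1,2,3,4)(5,6,7,8)(9,10). -/
/-! The vertices of degree 5 in `Γ_4` are those of the 4-cycle, and the rotation
`g = (1,2,3,4)(5,6,7,8)(9,10)` permutes them transitively, so every automorphism is a power of `g`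
once an automorphism fixing vertex 1 is shown to be the identity. Such an automorphism fixes 3, 9
and 10 (degree and adjacency to 1), then 5, 6, 7, 8 (adjacency to 1, 3, 9, 10), and finally 2 and
4, which only 5 tells apart: this is where the reflections of the 4-cycle are excluded.
In `Fin 10` the vertex with label `i` is `i - 1`. -/

namespace SimpleGraph

variable {V : Type*} {G : SimpleGraph V}

theorem Iso.mem_zpowers_of_apply_eq (φ f : G ≃g G) {v : V} (hfree : ∀ ψ : G ≃g G, ψ v = v → ψ = 1)
    {k : ℕ} (hk : (φ ^ k) v = f v) : f ∈ Subgroup.zpowers φ := by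
  have hf : φ ^ k = f :=
    inv_mul_eq_one.mp <| hfree _ (by rw [RelIso.mul_apply, ← hk, RelIso.inv_apply_self])
  exact hf ▸ Subgroup.npow_mem_zpowers φ k

variable [Fintype V] [DecidableEq V] [DecidableRel G.Adj]

variable (G) in
def Distinguishes (s t : Finset V) : Prop :=
  ∀ v ∈ t, ∀ w ∉ s, G.degree w = G.degree v → (∀ x ∈ s, G.Adj w x ↔ G.Adj v x) → w = v

instance (s t : Finset V) : Decidable (G.Distinguishes s t) := by
  unfold Distinguishes; infer_instance

theorem Iso.apply_eq_self_of_distinguishes (f : G ≃g G) {s t : Finset V}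
    (hs : ∀ x ∈ s, f x = x) (hst : G.Distinguishes s t) : ∀ v ∈ s ∪ t, f v = v := by
  intro v hv
  by_cases hvs : v ∈ s
  · exact hs v hvs
  have hv : v ∈ t := by simpa [hvs] using hv
  refine hst v hv (f v) (fun hfv => hvs ?_) (f.degree_eq v) fun x hx => ?_
  · rwa [← f.injective (hs _ hfv)]
  · have h := f.map_adj_iff (v := v) (w := x)
    rwa [hs x hx] at h

end SimpleGraph

open SimpleGraph

def gFunIso : Gamma 4 ≃g Gamma 4 :=
  ⟨⟨gFun 4, gFun 4 ∘ gFun 4 ∘ gFun 4, by decide, by decide⟩, by decide⟩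

theorem orderOf_gFunIso : orderOf gFunIso = 4 :=
  orderOf_eq_prime_pow (p := 2) (n := 1) (fun h => absurd (congrArg (· 0) h) (by decide))
    (RelIso.ext (by decide))

theorem gamma_four_aut_eq_one_of_apply_zero (ψ : Gamma 4 ≃g Gamma 4) (h0 : ψ 0 = 0) : ψ = 1 := by
  have h₁ := ψ.apply_eq_self_of_distinguishes (s := {0}) (by simpa using h0)
    (by decide : (Gamma 4).Distinguishes {0} {2, 8, 9})
  have h₂ := ψ.apply_eq_self_of_distinguishes h₁
    (by decide : (Gamma 4).Distinguishes ({0} ∪ {2, 8, 9}) {4, 5, 6, 7})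
  have h₃ := ψ.apply_eq_self_of_distinguishes h₂
    (by decide : (Gamma 4).Distinguishes ({0} ∪ {2, 8, 9} ∪ {4, 5, 6, 7}) {1, 3})
  exact RelIso.ext fun v => h₃ v (by fin_cases v <;> decide)

theorem mem_zpowers_gFunIso (f : Gamma 4 ≃g Gamma 4) : f ∈ Subgroup.zpowers gFunIso := by
  have horbit : ∀ v : Fin 10, (Gamma 4).degree v = (Gamma 4).degree 0 →
      ∃ k : Fin 4, (gFunIso ^ (k : ℕ)) 0 = v := by decide
  obtain ⟨k, hk⟩ := horbit (f 0) (f.degree_eq 0)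
  exact gFunIso.mem_zpowers_of_apply_eq f gamma_four_aut_eq_one_of_apply_zero hk

/-- `Γ_4` is a 10-vertex graph with `Aut(Γ_4) ≅ ℤ/4ℤ`, generated
    by `(1,2,3,4)(5,6,7,8)(9,10)`. -/
theorem stmt9 :
    ∃ φ : Gamma 4 ≃g Gamma 4, ⇑φ = gFun 4 ∧
      (∀ f : Gamma 4 ≃g Gamma 4, f ∈ Subgroup.zpowers φ) ∧
      Nonempty ((Gamma 4 ≃g Gamma 4) ≃* Multiplicative (ZMod 4)) := by
  have hcard : Nat.card (Gamma 4 ≃g Gamma 4) = 4 :=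
    (orderOf_eq_card_of_forall_mem_zpowers mem_zpowers_gFunIso).symm.trans orderOf_gFunIso
  exact ⟨gFunIso, rfl, mem_zpowers_gFunIso,
    ⟨(zmodMulEquivOfGenerator mem_zpowers_gFunIso hcard).symm⟩⟩
end

section
/- In the graph Γ_m with n ≥ 2, n ≠ 3, if f is an automorphism with f(1) = k where k ≡ 1 (mod 2), then f(m+5) = m+5; if k ≡ 0 (mod 2), then f(m+5) = m+6. -/
/-!
Automorphisms preserve degrees. The cycle vertices of `Γ_m` have degree `5`, the vertices
`m+1, …, m+4` have degree `m/2 + 1` and `m+5, m+6` have degree `m/2 + 2`; for `4 ∣ m` and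
`m ≠ 8` the value `5` is different from the other two. Hence `f` maps `1` to a cycle vertex `k`
and `m+5` into `{m+5, m+6}`, and since `1 ~ m+5`, `f(m+5)` is the one of `m+5, m+6` adjacent
to `k`, which is decided by the parity of `k`.
-/

open Finset

theorem Nat.mod_cases_of_lt_two_mul {a m : ℕ} (h : a < 2 * m) :
    a < m ∧ a % m = a ∨ m ≤ a ∧ a % m = a - m := by
  rcases lt_or_ge a m with ha | ha
  · exact Or.inl ⟨ha, Nat.mod_eq_of_lt ha⟩
  · exact Or.inr ⟨ha, by rw [Nat.mod_eq_sub_mod ha, Nat.mod_eq_of_lt (by omega)]⟩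

theorem Nat.card_filter_mod_eq_of_dvd {d m r : ℕ} (hd : d ∣ m) (hr : r < d) :
    #{i ∈ range m | i % d = r} = m / d := by
  have h := Nat.count_modEq_card m (by omega : 0 < d) r
  simp only [Nat.count_eq_card_filter_range, Nat.ModEq, Nat.mod_eq_of_lt hr,
    Nat.mod_eq_zero_of_dvd hd] at h
  simpa using h

theorem SimpleGraph.degree_eq_card_of_adj_iff {N : ℕ} (G : SimpleGraph (Fin N))
    [DecidableRel G.Adj] {v : Fin N} {S : Finset ℕ} (hS : ∀ i ∈ S, i < N)
    (h : ∀ w, G.Adj v w ↔ w.val ∈ S) : G.degree v = #S := by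
  rw [← card_neighborFinset_eq_degree, ← card_attachFin S hS]
  congr 1
  ext w
  simp only [mem_neighborFinset, h, mem_attachFin]

/- Vertices are named by their class of indices: `cycle` for `v.val < m`, `quad` for
`v.val = m + q` with `q < 4` (labels `m+1, …, m+4`) and `parity` for `v.val = m + 4 + r`
(labels `m+5, m+6`). -/
namespace Gamma

variable {m : ℕ} {v w : Fin (m + 6)}

theorem val_cases (w : Fin (m + 6)) :
    w.val < m ∨ (∃ q < 4, w.val = m + q) ∨ ∃ r < 2, w.val = m + 4 + r := by
  by_cases h : w.val < m + 4
  · exact (lt_or_ge w.val m).imp_right fun h' => Or.inl ⟨w.val - m, by omega, by omega⟩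
  · exact Or.inr (Or.inr ⟨w.val - (m + 4), by omega, by omega⟩)

theorem adj_cycle_cycle (hm : 2 ≤ m) (hv : v.val < m) (hw : w.val < m) :
    (Gamma m).Adj v w ↔ w.val = (v.val + 1) % m ∨ v.val = (w.val + 1) % m := by
  have hv' : ∀ k, v.val ≠ m + k := fun k => by omega
  have hw' : ∀ k, w.val ≠ m + k := fun k => by omega
  have hvsucc := Nat.mod_cases_of_lt_two_mul (by omega : v.val + 1 < 2 * m)
  have hwsucc := Nat.mod_cases_of_lt_two_mul (by omega : w.val + 1 < 2 * m)
  simp only [Gamma, rel0, ne_eq, Fin.ext_iff]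
  grind

theorem adj_cycle_quad {q : ℕ} (hv : v.val < m) (hw : w.val = m + q) (hq : q < 4) :
    (Gamma m).Adj v w ↔ v.val % 4 = q ∨ v.val % 4 = (q + 1) % 4 := by
  have hv' : ∀ k, v.val ≠ m + k := fun k => by omega
  simp only [Gamma, rel0, ne_eq, Fin.ext_iff, hw]
  grind

theorem adj_cycle_parity {r : ℕ} (hv : v.val < m) (hw : w.val = m + 4 + r) :
    (Gamma m).Adj v w ↔ v.val % 2 = r := by
  simp only [Gamma, rel0, ne_eq, Fin.ext_iff, hw]
  grind

theorem not_adj_quad_quad {q q' : ℕ} (hv : v.val = m + q) (hw : w.val = m + q') (hq : q < 4)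
    (hq' : q' < 4) : ¬ (Gamma m).Adj v w := by
  simp only [Gamma, rel0, ne_eq, Fin.ext_iff, hv, hw]
  omega

theorem adj_quad_parity {q r : ℕ} (hv : v.val = m + q) (hw : w.val = m + 4 + r) (hq : q < 4) :
    (Gamma m).Adj v w ↔ q % 2 = r := by
  simp only [Gamma, rel0, ne_eq, Fin.ext_iff, hw]
  grind

theorem not_adj_parity_parity {r r' : ℕ} (hv : v.val = m + 4 + r) (hw : w.val = m + 4 + r') :
    ¬ (Gamma m).Adj v w := by
  simp only [Gamma, rel0, ne_eq, Fin.ext_iff, hv, hw]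
  omega

theorem degree_cycle (hm : 3 ≤ m) (hv : v.val < m) : (Gamma m).degree v = 5 := by
  have hsucc := Nat.mod_cases_of_lt_two_mul (by omega : v.val + 1 < 2 * m)
  have hpred := Nat.mod_cases_of_lt_two_mul (by omega : v.val + m - 1 < 2 * m)
  rw [(Gamma m).degree_eq_card_of_adj_iff (S := {(v.val + 1) % m, (v.val + m - 1) % m,
    m + v.val % 4, m + (v.val + 3) % 4, m + 4 + v.val % 2})]
  · rw [card_insert_of_notMem, card_insert_of_notMem, card_insert_of_notMem,
      card_insert_of_notMem, card_singleton] <;>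
    simp only [mem_insert, mem_singleton] <;> omega
  · intro i hi
    simp only [mem_insert, mem_singleton] at hi
    omega
  · intro w
    simp only [mem_insert, mem_singleton]
    rcases val_cases w with hw | ⟨q, hq, hw⟩ | ⟨r, hr, hw⟩
    · have hwsucc := Nat.mod_cases_of_lt_two_mul (by omega : w.val + 1 < 2 * m)
      rw [adj_cycle_cycle (by omega) hv hw]
      omega
    · rw [adj_cycle_quad hv hw hq]
      omega
    · rw [adj_cycle_parity hv hw]
      omega

theorem degree_quad {q : ℕ} (hm : 4 ∣ m) (hv : v.val = m + q) (hq : q < 4) :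
    (Gamma m).degree v = m / 2 + 1 := by
  rw [(Gamma m).degree_eq_card_of_adj_iff
    (S := insert (m + 4 + q % 2) {i ∈ range m | i % 4 = q ∨ i % 4 = (q + 1) % 4})]
  · rw [card_insert_of_notMem (by simp only [mem_filter, mem_range]; omega), filter_or,
      card_union_of_disjoint (disjoint_filter.2 fun i _ h => by omega),
      Nat.card_filter_mod_eq_of_dvd hm hq,
      Nat.card_filter_mod_eq_of_dvd hm (Nat.mod_lt _ (by norm_num))]
    omega
  · intro i hi
    simp only [mem_insert, mem_filter, mem_range] at hi
    omega
  · intro w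
    simp only [mem_insert, mem_filter, mem_range]
    rcases val_cases w with hw | ⟨q', hq', hw⟩ | ⟨r, hr, hw⟩
    · rw [(Gamma m).adj_comm, adj_cycle_quad hw hv hq]
      omega
    · simp only [not_adj_quad_quad hv hw hq hq', false_iff]
      omega
    · rw [adj_quad_parity hv hw hq]
      omega

theorem degree_parity {r : ℕ} (hm : 2 ∣ m) (hv : v.val = m + 4 + r) :
    (Gamma m).degree v = m / 2 + 2 := by
  rw [(Gamma m).degree_eq_card_of_adj_iff
    (S := insert (m + r) (insert (m + r + 2) {i ∈ range m | i % 2 = r}))]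
  · rw [card_insert_of_notMem (by simp only [mem_insert, mem_filter, mem_range]; omega),
      card_insert_of_notMem (by simp only [mem_filter, mem_range]; omega),
      Nat.card_filter_mod_eq_of_dvd hm (by omega)]
  · intro i hi
    simp only [mem_insert, mem_filter, mem_range] at hi
    omega
  · intro w
    simp only [mem_insert, mem_filter, mem_range]
    rcases val_cases w with hw | ⟨q, hq, hw⟩ | ⟨r', hr', hw⟩
    · rw [(Gamma m).adj_comm, adj_cycle_parity hw hv]
      omega
    · rw [(Gamma m).adj_comm, adj_quad_parity hw hv hq]
      omega
    · simp only [not_adj_parity_parity hv hw, false_iff]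
      omega

theorem val_lt_of_degree_eq_five (hm : 4 ∣ m) (hm8 : m ≠ 8) (h : (Gamma m).degree v = 5) :
    v.val < m := by
  rcases val_cases v with hv | ⟨q, hq, hv⟩ | ⟨r, -, hv⟩
  · exact hv
  · rw [degree_quad hm hv hq] at h
    omega
  · rw [degree_parity (dvd_trans (by norm_num) hm) hv] at h
    omega

theorem add_four_le_val_of_degree_eq (hm : 4 ∣ m) (h : (Gamma m).degree v = m / 2 + 2) :
    m + 4 ≤ v.val := by
  rcases val_cases v with hv | ⟨q, hq, hv⟩ | ⟨r, -, hv⟩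
  · rw [degree_cycle (by omega) hv] at h
    omega
  · rw [degree_quad hm hv hq] at h
    omega
  · omega

end Gamma

/-- for `n ≠ 3`, if `f ∈ Aut(Γ_m)` and `f(1) = k`, then
    `f(m+5) = m+5` when `k` is odd, and `f(m+5) = m+6` when `k` is even. -/
theorem stmt12 (n m : ℕ) (hn : 2 ≤ n) (hn3 : n ≠ 3) (hm : m = 2 ^ n) :
    ∀ f : Gamma m ≃g Gamma m, ∀ k : Fin (m + 6),
      f ⟨0, by omega⟩ = k →
      (((k.val + 1) % 2 = 1 → f ⟨m + 4, by omega⟩ = ⟨m + 4, by omega⟩) ∧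
       ((k.val + 1) % 2 = 0 → f ⟨m + 4, by omega⟩ = ⟨m + 5, by omega⟩)) := by
  intro f k hk
  have h4 : 4 ∣ m := hm ▸ pow_dvd_pow 2 hn
  have h8 : m ≠ 8 := fun h =>
    hn3 (Nat.pow_right_injective le_rfl (hm.symm.trans (h.trans (by norm_num))))
  have hpos : 0 < m := hm ▸ by positivity
  have hkm : k.val < m := Gamma.val_lt_of_degree_eq_five h4 h8 <| by
    rw [← hk, f.degree_eq, Gamma.degree_cycle (by omega) hpos]
  have hfx : m + 4 ≤ (f ⟨m + 4, by omega⟩).val := Gamma.add_four_le_val_of_degree_eq h4 <| by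
    rw [f.degree_eq, Gamma.degree_parity (r := 0) (dvd_trans (by norm_num) h4) rfl]
  have hadj : (Gamma m).Adj k (f ⟨m + 4, by omega⟩) :=
    hk ▸ f.map_adj_iff.2 ((Gamma.adj_cycle_parity (r := 0) hpos rfl).2 rfl)
  have hpar := (Gamma.adj_cycle_parity (r := (f ⟨m + 4, by omega⟩).val - (m + 4)) hkm
    (by omega)).1 hadj
  constructor <;> intro h <;> ext <;> dsimp only <;> omega
end
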